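/- For a natural number n ≥ 3, the set of points (x,y) ∈ [0,1]^2 satisfying 1/2 - n x/(n+1) + y/(n+1) ≥ 0 and 1/2 - n y/(n+1) + x/(n+1) ≥ 0 equals the convex hull of the four points (0,0), ((n+1)/(2n), 0), (0, (n+1)/(2n)), ((n+1)/(2(n-1)), (n+1)/(2(n-1))). -/

import Mathlib

/-!
Each beta inequality is the half-plane `a x - y ≤ (a+1)/2` (resp. with `x` and `y` swapped), so
the region is a convex polygon; it contains the four vertices, the bounds `≤ 1` holding there
because `(a+1)/(2(a-1)) ≤ 1` for `a ≥ 3`. Conversely a point with `y ≤ x` equals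
`s • ((a+1)/(2a), 0) + t • (c, c)`, `c = (a+1)/(2(a-1))`, for `s = 2a(x-y)/(a+1)` and
`t = 2(a-1)y/(a+1)`, and `s + t ≤ 1` is exactly the first beta inequality.
-/

open Set

lemma smul_add_smul_mem_convexHull_zero {E : Type*} [AddCommGroup E] [Module ℝ E] (u v : E)
    {s t : ℝ} (hs : 0 ≤ s) (ht : 0 ≤ t) (hst : s + t ≤ 1) :
    s • u + t • v ∈ convexHull ℝ ({0, u, v} : Set E) := by
  have := (convex_convexHull ℝ ({0, u, v} : Set E)).sum_mem (t := Finset.univ)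
    (w := ![1 - s - t, s, t]) (z := ![0, u, v])
    (by intro i _; fin_cases i <;> simp [hs, ht]; linarith)
    (by simp [Fin.sum_univ_three]; ring)
    (by intro i _; fin_cases i <;> exact subset_convexHull ℝ _ (by simp))
  simpa [Fin.sum_univ_three] using this

lemma beta_ineq_iff {a : ℝ} (ha : 0 < a + 1) (x y : ℝ) :
    1 / 2 - a * x / (a + 1) + y / (a + 1) ≥ 0 ↔ a * x - y ≤ (a + 1) / 2 := by
  have : 1 / 2 - a * x / (a + 1) + y / (a + 1) = ((a + 1) / 2 - (a * x - y)) / (a + 1) := by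
    field_simp; ring
  rw [ge_iff_le, this, le_div_iff₀ ha, zero_mul, sub_nonneg]

def betaPolygon (a : ℝ) : Set (ℝ × ℝ) :=
  {p | p.1 ∈ Icc 0 1 ∧ p.2 ∈ Icc 0 1 ∧
    a * p.1 - p.2 ≤ (a + 1) / 2 ∧ a * p.2 - p.1 ≤ (a + 1) / 2}

def betaVertices (a : ℝ) : Set (ℝ × ℝ) :=
  {0, ((a + 1) / (2 * a), 0), (0, (a + 1) / (2 * a)),
    ((a + 1) / (2 * (a - 1)), (a + 1) / (2 * (a - 1)))}

lemma setOf_beta_ineq_eq_betaPolygon {a : ℝ} (ha : 0 < a + 1) :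
    {p : ℝ × ℝ | p.1 ∈ Icc 0 1 ∧ p.2 ∈ Icc 0 1 ∧
        1 / 2 - a * p.1 / (a + 1) + p.2 / (a + 1) ≥ 0 ∧
        1 / 2 - a * p.2 / (a + 1) + p.1 / (a + 1) ≥ 0} = betaPolygon a := by
  ext p
  simp only [betaPolygon, mem_ofPred_eq, beta_ineq_iff ha]

lemma convex_betaPolygon (a : ℝ) : Convex ℝ (betaPolygon a) := by
  rintro ⟨x, y⟩ ⟨⟨hx₀, hx₁⟩, ⟨hy₀, hy₁⟩, h₁, h₂⟩ ⟨x', y'⟩ ⟨⟨hx₀', hx₁'⟩, ⟨hy₀', hy₁'⟩, h₁', h₂'⟩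
    s t hs ht hst
  obtain rfl : t = 1 - s := by linarith
  simp only [betaPolygon, mem_ofPred_eq, Prod.smul_mk, Prod.mk_add_mk, smul_eq_mul, mem_Icc]
  refine ⟨⟨by positivity, by nlinarith⟩, ⟨by positivity, by nlinarith⟩, ?_, ?_⟩
  · linarith [mul_le_mul_of_nonneg_left h₁ hs, mul_le_mul_of_nonneg_left h₁' ht]
  · linarith [mul_le_mul_of_nonneg_left h₂ hs, mul_le_mul_of_nonneg_left h₂' ht]

lemma betaVertices_subset_betaPolygon {a : ℝ} (ha : 3 ≤ a) : betaVertices a ⊆ betaPolygon a := by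
  have h₀ : 0 < a := by linarith
  have h₁ : 0 < a - 1 := by linarith
  have hv₀ : 0 ≤ (a + 1) / (2 * a) := by positivity
  have hv₁ : (a + 1) / (2 * a) ≤ 1 := by rw [div_le_one (by positivity)]; linarith
  have hw₀ : 0 ≤ (a + 1) / (2 * (a - 1)) := by positivity
  have hw₁ : (a + 1) / (2 * (a - 1)) ≤ 1 := by rw [div_le_one (by positivity)]; linarith
  have hv : a * ((a + 1) / (2 * a)) = (a + 1) / 2 := by field_simp
  have hw : a * ((a + 1) / (2 * (a - 1))) - (a + 1) / (2 * (a - 1)) = (a + 1) / 2 := by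
    field_simp
  simp only [betaVertices, betaPolygon, insert_subset_iff, singleton_subset_iff, mem_ofPred_eq,
    mem_Icc, Prod.fst_zero, Prod.snd_zero]
  refine ⟨?_, ?_, ?_, ?_⟩ <;> refine ⟨⟨?_, ?_⟩, ⟨?_, ?_⟩, ?_, ?_⟩ <;> linarith

lemma betaPolygon_subset_convexHull {a : ℝ} (ha : 1 < a) :
    betaPolygon a ⊆ convexHull ℝ (betaVertices a) := by
  rintro ⟨x, y⟩ ⟨⟨hx, -⟩, ⟨hy, -⟩, h₁, h₂⟩
  dsimp only at hx hy h₁ h₂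
  have ha₀ : a ≠ 0 := by positivity
  have ha₁ : a - 1 ≠ 0 := by linarith
  have hd : 0 < a + 1 := by linarith
  rcases le_total y x with hyx | hxy
  · rw [show (x, y) = (2 * a * (x - y) / (a + 1)) • ((a + 1) / (2 * a), (0 : ℝ)) +
        (2 * (a - 1) * y / (a + 1)) • ((a + 1) / (2 * (a - 1)), (a + 1) / (2 * (a - 1))) by
      ext <;> simp <;> field_simp; ring]
    refine convexHull_mono ?_ (smul_add_smul_mem_convexHull_zero _ _
      (div_nonneg (by nlinarith) hd.le) (div_nonneg (by nlinarith) hd.le)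
      (by rw [← add_div, div_le_one hd]; linarith))
    simp [betaVertices, insert_subset_iff]
  · rw [show (x, y) = (2 * a * (y - x) / (a + 1)) • ((0 : ℝ), (a + 1) / (2 * a)) +
        (2 * (a - 1) * x / (a + 1)) • ((a + 1) / (2 * (a - 1)), (a + 1) / (2 * (a - 1))) by
      ext <;> simp <;> field_simp; ring]
    refine convexHull_mono ?_ (smul_add_smul_mem_convexHull_zero _ _
      (div_nonneg (by nlinarith) hd.le) (div_nonneg (by nlinarith) hd.le)
      (by rw [← add_div, div_le_one hd]; linarith))
    simp [betaVertices, insert_subset_iff]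

theorem betaPolygon_eq_convexHull {a : ℝ} (ha : 3 ≤ a) :
    betaPolygon a = convexHull ℝ (betaVertices a) :=
  (betaPolygon_subset_convexHull (by linarith)).antisymm
    (convexHull_min (betaVertices_subset_betaPolygon ha) (convex_betaPolygon a))

/-- The K-semistable domain of (Pⁿ, Q+Q') as a polytope. -/
theorem stmt_9 (n : ℕ) (hn : 3 ≤ n) :
    {p : ℝ × ℝ | p.1 ∈ Set.Icc (0 : ℝ) 1 ∧ p.2 ∈ Set.Icc (0 : ℝ) 1 ∧
        1 / 2 - (n : ℝ) * p.1 / ((n : ℝ) + 1) + p.2 / ((n : ℝ) + 1) ≥ 0 ∧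
        1 / 2 - (n : ℝ) * p.2 / ((n : ℝ) + 1) + p.1 / ((n : ℝ) + 1) ≥ 0} =
      convexHull ℝ {((0 : ℝ), (0 : ℝ)), (((n : ℝ) + 1) / (2 * n), 0),
        (0, ((n : ℝ) + 1) / (2 * n)),
        (((n : ℝ) + 1) / (2 * ((n : ℝ) - 1)), ((n : ℝ) + 1) / (2 * ((n : ℝ) - 1)))} := by
  rw [setOf_beta_ineq_eq_betaPolygon (by positivity)]
  exact betaPolygon_eq_convexHull (by exact_mod_cast hn)
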